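/- Let U be uniform on {−1,+1}, and let W and Y be random variables taking values in finite sets, jointly distributed with U, such that U is independent of Y. Then I2(U; (W, Y)) = Σ_{y : P(Y=y)>0} P(Y=y) · I2^{(y)}(U; W), where I2^{(y)}(U;W) denotes the chi-squared mutual information of U and W computed under the conditional distribution given Y = y. Moreover both sides equal E[(E[U | W, Y])²]. -/

import Mathlib

open Finset
open scoped Classical

noncomputable section

/-- Probability of an event under the probability mass function `p` on `Ω`. -/
def pr {Ω : Type*} [Fintype Ω] (p : Ω → ℝ) (E : Ω → Prop) : ℝ :=
  ∑ ω ∈ Finset.univ.filter (fun ω => E ω), p ω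

/-- Expectation of `f` under `p`. -/
def expec {Ω : Type*} [Fintype Ω] (p : Ω → ℝ) (f : Ω → ℝ) : ℝ :=
  ∑ ω, p ω * f ω

/-- The conditional expectation `E[U | A]`, as a random variable on `Ω`. -/
def condExp {Ω α : Type*} [Fintype Ω] (p : Ω → ℝ) (A : Ω → α) (U : Ω → ℝ) : Ω → ℝ :=
  fun ω => expec p (fun ω' => if A ω' = A ω then U ω' else 0) / pr p (fun ω' => A ω' = A ω)

/-- The variance of `f` under `p`. -/
def var {Ω : Type*} [Fintype Ω] (p : Ω → ℝ) (f : Ω → ℝ) : ℝ :=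
  expec p (fun ω => (f ω - expec p f)^2)

/-- The chi-squared mutual information `I2(A;B)`. -/
def I2 {Ω α β : Type*} [Fintype Ω] (p : Ω → ℝ) (A : Ω → α) (B : Ω → β) : ℝ :=
  ∑ a ∈ Finset.univ.image A, ∑ b ∈ Finset.univ.image B,
    if 0 < pr p (fun ω => A ω = a) * pr p (fun ω => B ω = b) then
      (pr p (fun ω => A ω = a ∧ B ω = b) - pr p (fun ω => A ω = a) * pr p (fun ω => B ω = b))^2
        / (pr p (fun ω => A ω = a) * pr p (fun ω => B ω = b))
    else 0

/- ### Auxiliary lemmas -/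

lemma pr_nonneg {Ω : Type*} [Fintype Ω] {p : Ω → ℝ} (hp : ∀ ω, 0 ≤ p ω) (E : Ω → Prop) :
    0 ≤ pr p E :=
  Finset.sum_nonneg fun ω _ => hp ω

lemma pr_congr {Ω : Type*} [Fintype Ω] {p : Ω → ℝ} {E F : Ω → Prop} (h : ∀ ω, E ω ↔ F ω) :
    pr p E = pr p F := by
  unfold pr
  congr 1
  ext ω
  simp [h ω]

lemma pr_and_le {Ω : Type*} [Fintype Ω] {p : Ω → ℝ} (hp : ∀ ω, 0 ≤ p ω) (E F : Ω → Prop) :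
    pr p (fun ω => E ω ∧ F ω) ≤ pr p F := by
  apply Finset.sum_le_sum_of_subset_of_nonneg
  · intro ω hω
    simp only [Finset.mem_filter] at *
    exact ⟨hω.1, hω.2.2⟩
  · intro ω _ _; exact hp ω

lemma pr_eq_zero {Ω : Type*} [Fintype Ω] {p : Ω → ℝ} {E : Ω → Prop} (h : ∀ ω, ¬ E ω) :
    pr p E = 0 := by
  unfold pr
  rw [Finset.filter_false_of_mem (fun ω _ => h ω), Finset.sum_empty]

lemma pr_split {Ω : Type*} [Fintype Ω] {p : Ω → ℝ} {U : Ω → ℝ}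
    (hUr : ∀ ω, U ω = 1 ∨ U ω = -1) (E : Ω → Prop) :
    pr p (fun ω => U ω = 1 ∧ E ω) + pr p (fun ω => U ω = -1 ∧ E ω) = pr p E := by
  unfold pr
  rw [← Finset.sum_filter_add_sum_filter_not (Finset.univ.filter fun ω => E ω)
    (fun ω => U ω = 1) p]
  congr 1
  · rw [Finset.filter_filter]
    apply Finset.sum_congr _ (fun _ _ => rfl)
    ext ω
    simp [and_comm]
  · rw [Finset.filter_filter]
    apply Finset.sum_congr _ (fun _ _ => rfl)
    ext ω
    rcases hUr ω with h | h <;> simp [h, and_comm] <;> norm_num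

/-- Canonical form of `I2` when `U` is uniform on `{1,-1}`. -/
lemma I2_pm {Ω β : Type*} [Fintype Ω] (p : Ω → ℝ) (hp : ∀ ω, 0 ≤ p ω)
    (U : Ω → ℝ) (hUr : ∀ ω, U ω = 1 ∨ U ω = -1)
    (h1 : pr p (fun ω => U ω = 1) = 1/2)
    (h2 : pr p (fun ω => U ω = -1) = 1/2)
    (B : Ω → β) :
    I2 p U B = ∑ b ∈ Finset.univ.image B,
      if 0 < pr p (fun ω => B ω = b) then
        (2 * pr p (fun ω => U ω = 1 ∧ B ω = b) - pr p (fun ω => B ω = b))^2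
          / pr p (fun ω => B ω = b)
      else 0 := by
  have hone : (1 : ℝ) ∈ Finset.univ.image U := by
    have hne : (Finset.univ.filter fun ω => U ω = 1).Nonempty := by
      by_contra h
      rw [Finset.not_nonempty_iff_eq_empty] at h
      unfold pr at h1
      rw [h] at h1
      simp at h1
    obtain ⟨ω, hω⟩ := hne
    simp only [Finset.mem_filter] at hω
    exact Finset.mem_image.2 ⟨ω, Finset.mem_univ ω, hω.2⟩
  have hmone : (-1 : ℝ) ∈ Finset.univ.image U := by
    have hne : (Finset.univ.filter fun ω => U ω = -1).Nonempty := by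
      by_contra h
      rw [Finset.not_nonempty_iff_eq_empty] at h
      unfold pr at h2
      rw [h] at h2
      simp at h2
    obtain ⟨ω, hω⟩ := hne
    simp only [Finset.mem_filter] at hω
    exact Finset.mem_image.2 ⟨ω, Finset.mem_univ ω, hω.2⟩
  have himg : Finset.univ.image U = ({1, -1} : Finset ℝ) := by
    apply Finset.Subset.antisymm
    · intro a ha
      obtain ⟨ω, _, rfl⟩ := Finset.mem_image.1 ha
      rcases hUr ω with h | h <;> simp [h]
    · intro a ha
      rcases Finset.mem_insert.1 ha with h | h
      · exact h ▸ hone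
      · simp only [Finset.mem_singleton] at h
        exact h ▸ hmone
  rw [I2, himg, Finset.sum_pair (by norm_num : (1:ℝ) ≠ -1), ← Finset.sum_add_distrib]
  apply Finset.sum_congr rfl
  intro b _
  rw [h1, h2]
  set q := pr p (fun ω => B ω = b) with hq
  set x := pr p (fun ω => U ω = 1 ∧ B ω = b) with hx
  have hxm : pr p (fun ω => U ω = -1 ∧ B ω = b) = q - x := by
    have := pr_split (p := p) hUr (fun ω => B ω = b)
    rw [← hx, ← hq] at this
    linarith
  rw [hxm]
  rcases lt_or_eq_of_le (pr_nonneg hp (fun ω => B ω = b)) with hq0 | hq0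
  · rw [← hq] at hq0
    have h12 : (0:ℝ) < 1/2 * q := by linarith
    rw [if_pos h12, if_pos h12, if_pos hq0]
    field_simp
    ring
  · rw [← hq] at hq0
    rw [if_neg (by rw [← hq0]; norm_num), if_neg (by rw [← hq0]; norm_num),
      if_neg (by rw [← hq0]; norm_num)]
    norm_num

lemma condExp_num {Ω β : Type*} [Fintype Ω] (p : Ω → ℝ)
    (U : Ω → ℝ) (hUr : ∀ ω, U ω = 1 ∨ U ω = -1) (B : Ω → β) (b : β) :
    expec p (fun ω' => if B ω' = b then U ω' else 0)
      = 2 * pr p (fun ω => U ω = 1 ∧ B ω = b) - pr p (fun ω => B ω = b) := by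
  have key : expec p (fun ω' => if B ω' = b then U ω' else 0)
      = pr p (fun ω => U ω = 1 ∧ B ω = b) - pr p (fun ω => U ω = -1 ∧ B ω = b) := by
    unfold expec pr
    rw [Finset.sum_filter, Finset.sum_filter, ← Finset.sum_sub_distrib]
    apply Finset.sum_congr rfl
    intro ω _
    rcases hUr ω with h | h <;> by_cases hb : B ω = b <;> simp [h, hb] <;> norm_num
  have split := pr_split (p := p) hUr (fun ω => B ω = b)
  linarith [key, split]

lemma expec_condExp_sq {Ω β : Type*} [Fintype Ω] (p : Ω → ℝ) (hp : ∀ ω, 0 ≤ p ω)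
    (U : Ω → ℝ) (hUr : ∀ ω, U ω = 1 ∨ U ω = -1) (B : Ω → β) :
    expec p (fun ω => (condExp p B U ω)^2)
      = ∑ b ∈ Finset.univ.image B,
        if 0 < pr p (fun ω => B ω = b) then
          (2 * pr p (fun ω => U ω = 1 ∧ B ω = b) - pr p (fun ω => B ω = b))^2
            / pr p (fun ω => B ω = b)
        else 0 := by
  have hce : ∀ ω, condExp p B U ω
      = (2 * pr p (fun ω' => U ω' = 1 ∧ B ω' = B ω) - pr p (fun ω' => B ω' = B ω))
        / pr p (fun ω' => B ω' = B ω) := by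
    intro ω
    rw [condExp, condExp_num p U hUr B (B ω)]
  rw [expec]
  rw [← Finset.sum_fiberwise_of_maps_to (g := B) (t := Finset.univ.image B)
    (fun ω _ => Finset.mem_image.2 ⟨ω, Finset.mem_univ ω, rfl⟩)]
  apply Finset.sum_congr rfl
  intro b hb
  have : ∀ ω ∈ Finset.univ.filter (fun ω => B ω = b),
      p ω * (condExp p B U ω)^2
        = p ω * ((2 * pr p (fun ω' => U ω' = 1 ∧ B ω' = b) - pr p (fun ω' => B ω' = b))
            / pr p (fun ω' => B ω' = b))^2 := by
    intro ω hω
    simp only [Finset.mem_filter] at hω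
    rw [hce ω, hω.2]
  rw [Finset.sum_congr rfl this, ← Finset.sum_mul]
  have hqdef : ∑ ω ∈ Finset.univ.filter (fun ω => B ω = b), p ω = pr p (fun ω => B ω = b) := rfl
  rw [hqdef]
  set q := pr p (fun ω => B ω = b) with hq
  set x := pr p (fun ω => U ω = 1 ∧ B ω = b) with hx
  have hqn : (0:ℝ) ≤ q := Finset.sum_nonneg (fun ω _ => hp ω)
  rcases lt_or_eq_of_le hqn with hq0 | hq0
  · rw [if_pos hq0, div_pow]
    rw [eq_div_iff (ne_of_gt hq0)]
    field_simp
  · rw [if_neg (by rw [← hq0]; norm_num), ← hq0]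
    ring

lemma pr_cond {Ω γy : Type*} [Fintype Ω] (p : Ω → ℝ) (Y : Ω → γy) (y : γy) (E : Ω → Prop) :
    pr (fun ω => if Y ω = y then p ω / pr p (fun ω' => Y ω' = y) else 0) E
      = pr p (fun ω => E ω ∧ Y ω = y) / pr p (fun ω' => Y ω' = y) := by
  unfold pr
  rw [Finset.sum_div, ← Finset.sum_filter]
  apply Finset.sum_congr _ (fun _ _ => rfl)
  ext ω
  simp

/-- If `U` is uniform on `{-1,+1}` and independent of `Y`, then
`I2(U; (W,Y)) = ∑_{y : P(Y=y)>0} P(Y=y) · I2^{(y)}(U; W)`, where `I2^{(y)}` is the chi-squared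
mutual information under the conditional distribution given `Y = y`; moreover both sides equal
`E[(E[U | W, Y])²]`. -/
theorem stmt9 {Ω γw γy : Type*} [Fintype Ω]
    (p : Ω → ℝ) (hp : ∀ ω, 0 ≤ p ω) (hps : ∑ ω, p ω = 1)
    (U : Ω → ℝ) (W : Ω → γw) (Y : Ω → γy)
    (hUr : ∀ ω, U ω = 1 ∨ U ω = -1)
    (hunif : pr p (fun ω => U ω = 1) = 1/2)
    (hindep : ∀ (u : ℝ) (y : γy),
      pr p (fun ω => U ω = u ∧ Y ω = y)
        = pr p (fun ω => U ω = u) * pr p (fun ω => Y ω = y)) :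
    I2 p U (fun ω => (W ω, Y ω))
      = (∑ y ∈ Finset.univ.image Y,
          if 0 < pr p (fun ω => Y ω = y) then
            pr p (fun ω => Y ω = y) *
              I2 (fun ω => if Y ω = y then p ω / pr p (fun ω' => Y ω' = y) else 0) U W
          else 0) ∧
    I2 p U (fun ω => (W ω, Y ω))
      = expec p (fun ω => (condExp p (fun ω' => (W ω', Y ω')) U ω)^2) := by
  -- `P(U = -1) = 1/2`
  have hU2 : pr p (fun ω => U ω = -1) = 1/2 := by
    have h := pr_split (p := p) hUr (fun _ => True)
    have htrue : pr p (fun _ : Ω => True) = 1 := by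
      unfold pr; rw [Finset.filter_true]; exact hps
    have e1 : pr p (fun ω => U ω = 1 ∧ True) = pr p (fun ω => U ω = 1) :=
      pr_congr (by simp)
    have e2 : pr p (fun ω => U ω = -1 ∧ True) = pr p (fun ω => U ω = -1) :=
      pr_congr (by simp)
    rw [e1, e2, htrue, hunif] at h
    linarith
  have hcanon := I2_pm p hp U hUr hunif hU2 (fun ω => (W ω, Y ω))
  constructor
  · -- first identity
    letI : DecidableEq (γw × γy) := fun a b => Classical.propDecidable (a = b)
    rw [hcanon]
    -- canonical form in terms of `w` and `y`
    set F : γw → γy → ℝ := fun w y =>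
      if 0 < pr p (fun ω => W ω = w ∧ Y ω = y) then
        (2 * pr p (fun ω => U ω = 1 ∧ W ω = w ∧ Y ω = y)
          - pr p (fun ω => W ω = w ∧ Y ω = y))^2
          / pr p (fun ω => W ω = w ∧ Y ω = y)
      else 0 with hF
    have step1 : (∑ b ∈ Finset.univ.image (fun ω => (W ω, Y ω)),
        if 0 < pr p (fun ω => (W ω, Y ω) = b) then
          (2 * pr p (fun ω => U ω = 1 ∧ (W ω, Y ω) = b) - pr p (fun ω => (W ω, Y ω) = b))^2
            / pr p (fun ω => (W ω, Y ω) = b)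
        else 0)
        = ∑ b ∈ Finset.univ.image (fun ω => (W ω, Y ω)), F b.1 b.2 := by
      apply Finset.sum_congr rfl
      intro b _
      obtain ⟨w, y⟩ := b
      rw [show pr p (fun ω => (W ω, Y ω) = (w, y)) = pr p (fun ω => W ω = w ∧ Y ω = y) from
          pr_congr (by intro ω; simp [Prod.ext_iff]),
        show pr p (fun ω => U ω = 1 ∧ (W ω, Y ω) = (w, y))
            = pr p (fun ω => U ω = 1 ∧ W ω = w ∧ Y ω = y) from
          pr_congr (by intro ω; simp [Prod.ext_iff])]
    have step2 : (∑ b ∈ Finset.univ.image (fun ω => (W ω, Y ω)), F b.1 b.2)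
        = ∑ b ∈ (Finset.univ.image W) ×ˢ (Finset.univ.image Y), F b.1 b.2 := by
      apply Finset.sum_subset
      · intro b hb
        obtain ⟨ω, _, rfl⟩ := Finset.mem_image.1 hb
        exact Finset.mem_product.2 ⟨Finset.mem_image.2 ⟨ω, Finset.mem_univ ω, rfl⟩,
          Finset.mem_image.2 ⟨ω, Finset.mem_univ ω, rfl⟩⟩
      · intro b _ hnb
        have hz : pr p (fun ω => W ω = b.1 ∧ Y ω = b.2) = 0 := by
          apply pr_eq_zero
          intro ω hω
          exact hnb (Finset.mem_image.2 ⟨ω, Finset.mem_univ ω, Prod.ext hω.1 hω.2⟩)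
        simp only [hF, hz]
        norm_num
    refine step1.trans (step2.trans ?_)
    rw [Finset.sum_product, Finset.sum_comm]
    apply Finset.sum_congr rfl
    intro y _
    set qy := pr p (fun ω => Y ω = y) with hqy
    have hqyn : (0:ℝ) ≤ qy := pr_nonneg hp _
    rcases lt_or_eq_of_le hqyn with hqy0 | hqy0
    · rw [if_pos hqy0]
      set py : Ω → ℝ := fun ω => if Y ω = y then p ω / qy else 0 with hpy
      have hpyn : ∀ ω, 0 ≤ py ω := by
        intro ω
        simp only [hpy]
        split_ifs
        · exact div_nonneg (hp ω) hqyn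
        · exact le_refl 0
      have hcond : ∀ E : Ω → Prop, pr py E = pr p (fun ω => E ω ∧ Y ω = y) / qy :=
        fun E => pr_cond p Y y E
      have hpy1 : pr py (fun ω => U ω = 1) = 1/2 := by
        rw [hcond, hindep 1 y, hunif, ← hqy]
        field_simp
      have hpy2 : pr py (fun ω => U ω = -1) = 1/2 := by
        rw [hcond, hindep (-1) y, hU2, ← hqy]
        field_simp
      rw [I2_pm py hpyn U hUr hpy1 hpy2 W, Finset.mul_sum]
      apply Finset.sum_congr rfl
      intro w _
      rw [hcond, hcond]
      rw [show pr p (fun ω => (U ω = 1 ∧ W ω = w) ∧ Y ω = y)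
          = pr p (fun ω => U ω = 1 ∧ W ω = w ∧ Y ω = y) from pr_congr (by tauto)]
      set r := pr p (fun ω => W ω = w ∧ Y ω = y) with hr
      set s := pr p (fun ω => U ω = 1 ∧ W ω = w ∧ Y ω = y) with hs
      have hrn : (0:ℝ) ≤ r := pr_nonneg hp _
      have hdiv : 0 < r / qy ↔ 0 < r := by
        constructor
        · intro h
          rcases lt_or_eq_of_le hrn with h' | h'
          · exact h'
          · rw [← h'] at h; simp at h
        · intro h; exact div_pos h hqy0
      simp only [hF]
      by_cases hr0 : 0 < r
      · rw [if_pos (hdiv.2 hr0), if_pos hr0]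
        have hqyne : qy ≠ 0 := ne_of_gt hqy0
        have hrne : r ≠ 0 := ne_of_gt hr0
        simp only [← hr, ← hs]
        field_simp
      · rw [if_neg (fun h => hr0 (hdiv.1 h)), if_neg hr0, mul_zero]
    · rw [if_neg (by rw [← hqy0]; norm_num)]
      apply Finset.sum_eq_zero
      intro w _
      have hle : pr p (fun ω => W ω = w ∧ Y ω = y) ≤ qy := pr_and_le hp _ _
      have hge : (0:ℝ) ≤ pr p (fun ω => W ω = w ∧ Y ω = y) := pr_nonneg hp _
      have : pr p (fun ω => W ω = w ∧ Y ω = y) = 0 := le_antisymm (by linarith) hge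
      simp only [hF, this]
      norm_num
  · rw [hcanon, expec_condExp_sq p hp U hUr (fun ω => (W ω, Y ω))]

end
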